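/- arXiv:math/0311242 — 5 statements merged into one kernel-verified Lean document; each statement's English description precedes it below -/
import Mathlib

section
/- For any lattice path P from (0,0) to (m,r) using N and E steps, the collection B(P) of subsets of {1,...,m+r} of the form {i : π_i = N} as π ranges over all lattice paths from (0,0) to (m,r) that never go above P, forms the set of bases of a matroid; that is, (1) no member of B(P) properly contains another, and (2) for distinct B, B' in B(P) and any x ∈ B \ B', there exists y ∈ B' \ B with (B \ {x}) ∪ {y} ∈ B(P). -/
open Finset

/-- `π` never goes above `P`: every prefix of `π` contains at most as many `N` steps
(`true`) as the corresponding prefix of `P`. -/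
def NotAbove (π P : List Bool) : Prop :=
  ∀ j ∈ Finset.range (P.length + 1), (π.take j).count true ≤ (P.take j).count true

instance (π P : List Bool) : Decidable (NotAbove π P) := by
  unfold NotAbove; infer_instance

/-- The lattice paths (encoded as functions `Fin P.length → Bool`, with `true` = North
and `false` = East) from `(0,0)` to the endpoint of `P` that never go above `P`. -/
def pathsBelow (P : List Bool) : Finset (Fin P.length → Bool) :=
  Finset.univ.filter fun f =>
    (List.ofFn f).count true = P.count true ∧ NotAbove (List.ofFn f) P

/-- The word `(N^k E^l)^n`. -/
def zigzag (k l n : ℕ) : List Bool :=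
  (List.replicate n (List.replicate k true ++ List.replicate l false)).flatten

/-- `e(π)`: the number of East steps of `π` before its first North step. -/
def eStat (w : List Bool) : ℕ := (w.takeWhile fun b => b = false).length

/-- `i(π)`: the number of North steps that `π` has in common with `P`
(same position and matching prefix `N`-counts, i.e. the same lattice segment). -/
def iStat (π P : List Bool) : ℕ :=
  ((Finset.range P.length).filter fun j =>
    π.getD j false = true ∧ P.getD j false = true ∧
      (π.take j).count true = (P.take j).count true).card

/-- `W(P)(x,y) = Σ_π x^{i(π)} y^{e(π)}`, over all paths `π` not above `P`. -/
def W (P : List Bool) (x y : ℤ) : ℤ :=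
  ∑ f ∈ pathsBelow P, x ^ iStat (List.ofFn f) P * y ^ eStat (List.ofFn f)

/-- The sets of (one can take 0-based) positions of North steps of paths not above `P`. -/
def basesOf (P : List Bool) : Finset (Finset (Fin P.length)) :=
  (pathsBelow P).image fun f => Finset.univ.filter fun i => f i = true

lemma countF : ∀ (n : ℕ) (f : Fin n → Bool),
    (List.ofFn f).count true = (Finset.univ.filter fun i => f i = true).card := by
  intro n
  induction n with
  | zero => intro f; simp
  | succ n ih =>
    intro f
    rw [List.ofFn_succ, List.count_cons, Finset.card_filter, Fin.sum_univ_succ,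
      ← Finset.card_filter, ih]
    cases h : f 0 <;> simp [h, Nat.add_comm]

lemma takeCount {n : ℕ} (f : Fin n → Bool) {j : ℕ} (hj : j ≤ n) :
    ((List.ofFn f).take j).count true
      = (Finset.univ.filter fun i : Fin n => i.val < j ∧ f i = true).card := by
  rw [← Fin.ofFn_take_eq_take_ofFn hj, countF]
  apply Finset.card_bij (fun i _ => Fin.castLE hj i)
  · intro a ha
    simp only [Finset.mem_filter, Finset.mem_univ, true_and] at ha ⊢
    exact ⟨a.isLt, ha⟩
  · intro a _ b _ h
    exact Fin.castLE_injective hj h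
  · intro b hb
    simp only [Finset.mem_filter, Finset.mem_univ, true_and] at hb
    exact ⟨⟨b.val, hb.1⟩, by simp only [Finset.mem_filter, Finset.mem_univ, true_and]; exact hb.2, rfl⟩

lemma mem_basesOf {P : List Bool} {B : Finset (Fin P.length)} :
    B ∈ basesOf P ↔ B.card = P.count true ∧
      ∀ j ≤ P.length, (B.filter fun i => i.val < j).card ≤ (P.take j).count true := by
  constructor
  · rintro hB
    obtain ⟨f, hf, rfl⟩ := Finset.mem_image.mp hB
    simp only [pathsBelow, Finset.mem_filter, Finset.mem_univ, true_and] at hf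
    refine ⟨by rw [← countF]; exact hf.1, fun j hj => ?_⟩
    have := hf.2 j (Finset.mem_range.mpr (Nat.lt_succ_of_le hj))
    rw [takeCount f hj] at this
    refine le_trans (le_of_eq ?_) this
    congr 1
    ext i
    simp [and_comm]
  · rintro ⟨h1, h2⟩
    refine Finset.mem_image.mpr ⟨fun i => decide (i ∈ B), ?_, ?_⟩
    · simp only [pathsBelow, Finset.mem_filter, Finset.mem_univ, true_and]
      have key : (Finset.univ.filter fun i => (decide (i ∈ B)) = true) = B := by
        ext i; simp
      constructor
      · rw [countF, key, h1]
      · intro j hj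
        have hj' : j ≤ P.length := Nat.lt_succ_iff.mp (Finset.mem_range.mp hj)
        rw [takeCount _ hj']
        refine le_trans (le_of_eq ?_) (h2 j hj')
        congr 1
        ext i
        simp [and_comm]
    · ext i; simp

/-- the `N`-step sets of paths not above `P` form the bases of a matroid. -/
theorem stmt3 (P : List Bool) :
    (basesOf P).Nonempty ∧
    (∀ B ∈ basesOf P, ∀ B' ∈ basesOf P, B ⊆ B' → B = B') ∧
    (∀ B ∈ basesOf P, ∀ B' ∈ basesOf P, B ≠ B' → ∀ x ∈ B \ B',
      ∃ y ∈ B' \ B, insert y (B.erase x) ∈ basesOf P) := by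
  refine ⟨?_, ?_, ?_⟩
  · -- P itself
    refine ⟨Finset.univ.filter fun i => P.get i = true, mem_basesOf.mpr ⟨?_, ?_⟩⟩
    · rw [← countF]
      congr 1
      exact List.ofFn_get P
    · intro j hj
      have h2 := takeCount (fun i : Fin P.length => P.get i) hj
      rw [show List.ofFn (fun i : Fin P.length => P.get i) = P from List.ofFn_get P] at h2
      rw [Finset.filter_filter, h2]
      apply le_of_eq
      congr 1
      ext i
      simp [and_comm]
  · intro B hB B' hB' hsub
    exact Finset.eq_of_subset_of_card_le hsub
      (le_of_eq ((mem_basesOf.mp hB').1.trans (mem_basesOf.mp hB).1.symm))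
  · intro B hB B' hB' hne x hx
    obtain ⟨hBc, hBp⟩ := mem_basesOf.mp hB
    obtain ⟨hBc', hBp'⟩ := mem_basesOf.mp hB'
    rw [Finset.mem_sdiff] at hx
    obtain ⟨hxB, hxB'⟩ := hx
    have hdiff : (B' \ B).Nonempty := by
      rw [Finset.sdiff_nonempty]
      intro hsub
      exact hne (Finset.eq_of_subset_of_card_le hsub (le_of_eq (hBc.trans hBc'.symm))).symm
    -- common facts
    have card_new : ∀ y ∉ B, (insert y (B.erase x)).card = B.card := by
      intro y hy
      rw [Finset.card_insert_of_notMem (fun h => hy (Finset.mem_of_mem_erase h)),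
        Finset.card_erase_of_mem hxB]
      have : 1 ≤ B.card := Finset.card_pos.mpr ⟨x, hxB⟩
      omega
    by_cases hcase : ∃ y ∈ B' \ B, x < y
    · obtain ⟨y, hyd, hxy⟩ := hcase
      have hyB : y ∉ B := (Finset.mem_sdiff.mp hyd).2
      refine ⟨y, hyd, mem_basesOf.mpr ⟨(card_new y hyB).trans hBc, fun j hj => ?_⟩⟩
      refine le_trans ?_ (hBp j hj)
      rw [Finset.filter_insert, Finset.filter_erase]
      by_cases hyj : y.val < j
      · rw [if_pos hyj]
        have hxj : x.val < j := lt_trans (Fin.lt_def.mp hxy) hyj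
        have hxmem : x ∈ B.filter (fun i => i.val < j) := Finset.mem_filter.mpr ⟨hxB, hxj⟩
        have hynot : y ∉ (B.filter fun i => i.val < j).erase x :=
          fun h => hyB (Finset.mem_filter.mp (Finset.mem_of_mem_erase h)).1
        rw [Finset.card_insert_of_notMem hynot, Finset.card_erase_of_mem hxmem]
        have : 1 ≤ (B.filter fun i => i.val < j).card := Finset.card_pos.mpr ⟨x, hxmem⟩
        omega
      · rw [if_neg hyj]
        exact le_trans (Finset.card_le_card (Finset.erase_subset _ _)) le_rfl
    · push_neg at hcase
      set y := (B' \ B).max' hdiff with hy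
      have hyd : y ∈ B' \ B := (B' \ B).max'_mem hdiff
      have hyB : y ∉ B := (Finset.mem_sdiff.mp hyd).2
      have hyx : y < x := lt_of_le_of_ne (hcase y hyd)
        (fun h => hxB' (h ▸ (Finset.mem_sdiff.mp hyd).1))
      refine ⟨y, hyd, mem_basesOf.mpr ⟨(card_new y hyB).trans hBc, fun j hj => ?_⟩⟩
      rw [Finset.filter_insert, Finset.filter_erase]
      by_cases hyj : y.val < j
      · rw [if_pos hyj]
        have hynot : y ∉ (B.filter fun i => i.val < j).erase x :=
          fun h => hyB (Finset.mem_filter.mp (Finset.mem_of_mem_erase h)).1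
        rw [Finset.card_insert_of_notMem hynot]
        by_cases hxj : x.val < j
        · have hxmem : x ∈ B.filter (fun i => i.val < j) := Finset.mem_filter.mpr ⟨hxB, hxj⟩
          rw [Finset.card_erase_of_mem hxmem]
          have h1 : 1 ≤ (B.filter fun i => i.val < j).card := Finset.card_pos.mpr ⟨x, hxmem⟩
          have := hBp j hj
          omega
        · have herase : (Finset.filter (fun i => i.val < j) B).erase x
              = Finset.filter (fun i => i.val < j) B :=
            Finset.erase_eq_of_notMem (fun h => hxj (Finset.mem_filter.mp h).2)
          rw [herase]
          -- key strict inequality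
          have hss : B'.filter (fun i => ¬ i.val < j) ⊂ B.filter (fun i => ¬ i.val < j) := by
            constructor
            · intro z hz
              obtain ⟨hz1, hz2⟩ := Finset.mem_filter.mp hz
              refine Finset.mem_filter.mpr ⟨?_, hz2⟩
              by_contra hzB
              have hzle : z ≤ y := (B' \ B).le_max' z (Finset.mem_sdiff.mpr ⟨hz1, hzB⟩)
              exact hz2 (lt_of_le_of_lt (Fin.le_def.mp hzle) hyj)
            · intro hsub
              have := hsub (Finset.mem_filter.mpr ⟨hxB, hxj⟩)
              exact hxB' (Finset.mem_filter.mp this).1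
          have hqlt := Finset.card_lt_card hss
          have hs1 := Finset.card_filter_add_card_filter_not
            (s := B) (p := fun i : Fin P.length => i.val < j)
          have hs2 := Finset.card_filter_add_card_filter_not
            (s := B') (p := fun i : Fin P.length => i.val < j)
          have := hBp' j hj
          omega
      · rw [if_neg hyj]
        exact le_trans (Finset.card_le_card (Finset.erase_subset _ _)) (hBp j hj)
end

section
/- Let P be a lattice path from (0,0) to (m,r), and for each lattice path π from (0,0) to (m,r) that never goes above P, let i(π) be the number of positions j such that π_j = P_j = N and the prefix counts of N in π and P agree at position j (i.e., the N steps π has in common with P as lattice steps), and let e(π) be the number of E steps of π preceding its first N step. Define W(P)(x,y) = Σ_π x^{i(π)} y^{e(π)}, summed over all π not above P. Then W(PE)(x,y)·(x-1) = x·(W(P)(x,y) − W(P)(1,y)) + (x-1)·y·W(P)(1,y), where PE is P with an East step appended. -/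
open Finset

namespace Stmt4Aux

/-! ### prefix counts -/

/-- prefix count of `true`s -/
def cnt (w : List Bool) (j : ℕ) : ℕ := (w.take j).count true

lemma cnt_zero (w : List Bool) : cnt w 0 = 0 := rfl

lemma cnt_mono (w : List Bool) {j m : ℕ} (h : j ≤ m) : cnt w j ≤ cnt w m := by
  unfold cnt
  have : w.take j = (w.take m).take j := by rw [List.take_take, Nat.min_eq_left h]
  rw [this]
  exact ((w.take m).take_sublist j).count_le true

lemma cnt_succ (w : List Bool) (j : ℕ) :
    cnt w (j + 1) = cnt w j + (if w.getD j false = true then 1 else 0) := by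
  unfold cnt
  rw [List.take_succ, List.count_append]
  congr 1
  rcases h : w[j]? with _ | b
  · simp [List.getD_eq_getElem?_getD, h]
  · rcases b <;> simp [List.getD_eq_getElem?_getD, h]

lemma cnt_succ_true (w : List Bool) {j : ℕ} (h : w.getD j false = true) :
    cnt w (j + 1) = cnt w j + 1 := by rw [cnt_succ, if_pos h]

lemma cnt_succ_false (w : List Bool) {j : ℕ} (h : w.getD j false = false) :
    cnt w (j + 1) = cnt w j := by rw [cnt_succ, h]; simp

lemma cnt_length (w : List Bool) {j : ℕ} (h : w.length ≤ j) : cnt w j = w.count true := by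
  unfold cnt; rw [List.take_of_length_le h]

/-! ### insertion and deletion -/

/-- insert an `E` step at position `p` -/
def ins (w : List Bool) (p : ℕ) : List Bool := w.take p ++ false :: w.drop p

/-- delete the step at position `p` -/
def del (w : List Bool) (p : ℕ) : List Bool := w.take p ++ w.drop (p + 1)

lemma ins_zero (w : List Bool) : ins w 0 = false :: w := rfl

lemma length_ins (w : List Bool) {p : ℕ} (hp : p ≤ w.length) :
    (ins w p).length = w.length + 1 := by
  simp [ins]; omega

lemma length_del (w : List Bool) {p : ℕ} (hp : p < w.length) :
    (del w p).length = w.length - 1 := by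
  simp [del]; omega

lemma count_ins (w : List Bool) (p : ℕ) : (ins w p).count true = w.count true := by
  unfold ins
  rw [List.count_append, List.count_cons]
  simp
  rw [← List.count_append, List.take_append_drop]

lemma del_ins (w : List Bool) {p : ℕ} (hp : p ≤ w.length) : del (ins w p) p = w := by
  unfold del ins
  have h1 : (w.take p).length = p := by simp; omega
  rw [List.take_append, List.drop_append, h1]
  simp only [List.take_take, Nat.min_self, Nat.sub_self, List.take_zero, List.append_nil,
    List.drop_succ_cons, List.drop_zero]
  rw [List.drop_of_length_le (by omega), Nat.add_sub_cancel_left]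
  simp [List.take_append_drop]

lemma ins_del (w : List Bool) {p : ℕ} (hp : p < w.length) (hf : w.getD p false = false) :
    ins (del w p) p = w := by
  unfold ins del
  have h1 : (w.take p).length = p := by simp; omega
  rw [List.take_append, List.drop_append, h1]
  simp only [List.take_take, Nat.min_self, Nat.sub_self, List.take_zero, List.append_nil,
    List.drop_zero]
  rw [List.drop_of_length_le (le_of_eq h1)]
  simp only [List.nil_append]
  have h2 : w.drop p = w[p] :: w.drop (p+1) := List.drop_eq_getElem_cons hp
  have h3 : w[p] = false := by
    rw [List.getD_eq_getElem?_getD, List.getElem?_eq_getElem hp] at hf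
    simpa using hf
  conv_rhs => rw [← List.take_append_drop p w, h2, h3]

lemma cnt_ins_of_le (w : List Bool) {p m : ℕ} (hp : p ≤ w.length) (h : m ≤ p) :
    cnt (ins w p) m = cnt w m := by
  unfold cnt ins
  rw [List.take_append]
  have : m - (w.take p).length = 0 := by simp; omega
  rw [this, List.take_zero, List.append_nil, List.take_take, Nat.min_eq_left h]

lemma cnt_ins_of_gt (w : List Bool) {p m : ℕ} (hp : p ≤ w.length) (h : p < m) :
    cnt (ins w p) m = cnt w (m - 1) := by
  obtain ⟨n, rfl⟩ : ∃ n, m = n + 1 := ⟨m - 1, by omega⟩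
  have h1 : (w.take p).length = p := by simp; omega
  have h2 : n + 1 - p = (n - p) + 1 := by omega
  have lhs : cnt (ins w p) (n+1)
      = (w.take p).count true + (List.take (n-p) (w.drop p)).count true := by
    unfold cnt ins
    rw [List.take_append, h1, h2,
      List.take_of_length_le (le_of_eq (by omega : (w.take p).length = p) |>.trans (by omega)),
      List.take_succ_cons, List.count_append, List.count_cons]
    simp
  have rhs : cnt w ((n+1) - 1)
      = (w.take p).count true + (List.take (n-p) (w.drop p)).count true := by
    unfold cnt
    conv_lhs => rw [← List.take_append_drop p w]
    rw [Nat.add_sub_cancel, List.take_append, h1,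
      List.take_of_length_le (le_of_eq (by omega : (w.take p).length = p) |>.trans (by omega)),
      List.count_append]
  rw [lhs, rhs]

lemma getD_ins_of_lt (w : List Bool) {p m : ℕ} (hp : p ≤ w.length) (h : m < p) :
    (ins w p).getD m false = w.getD m false := by
  unfold ins
  have h1 : (w.take p).length = p := by simp; omega
  rw [List.getD_eq_getElem?_getD, List.getD_eq_getElem?_getD,
    List.getElem?_append_left (by omega), List.getElem?_take_of_lt h]

lemma getD_ins_self (w : List Bool) {p : ℕ} (hp : p ≤ w.length) :
    (ins w p).getD p false = false := by
  unfold ins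
  have h1 : (w.take p).length = p := by simp; omega
  rw [List.getD_eq_getElem?_getD, List.getElem?_append_right h1.le, h1]
  simp

lemma getD_ins_of_gt (w : List Bool) {p m : ℕ} (hp : p ≤ w.length) (h : p < m) :
    (ins w p).getD m false = w.getD (m - 1) false := by
  obtain ⟨n, rfl⟩ : ∃ n, m = n + 1 := ⟨m - 1, by omega⟩
  unfold ins
  have h1 : (w.take p).length = p := by simp; omega
  rw [List.getD_eq_getElem?_getD, List.getElem?_append_right (by omega), h1]
  have h2 : n + 1 - p = (n - p) + 1 := by omega
  rw [h2]
  simp only [List.getElem?_cons_succ]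
  rw [List.getD_eq_getElem?_getD, List.getElem?_drop]
  congr 2
  omega

/-! ### eStat -/

lemma ins_cons (b : Bool) (tl : List Bool) (j : ℕ) :
    ins (b :: tl) (j + 1) = b :: ins tl j := by simp [ins]

lemma eStat_cons_false (w : List Bool) : eStat (false :: w) = eStat w + 1 := by
  simp [eStat, List.takeWhile_cons]

lemma eStat_cons_true (w : List Bool) : eStat (true :: w) = 0 := by
  simp [eStat, List.takeWhile_cons]

lemma eStat_ins (w : List Bool) (j : ℕ) (h : w.getD j false = true) :
    eStat (ins w (j + 1)) = eStat w := by
  induction w generalizing j with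
  | nil => simp at h
  | cons b tl ih =>
    rw [ins_cons]
    cases b with
    | true => rw [eStat_cons_true, eStat_cons_true]
    | false =>
      cases j with
      | zero => simp at h
      | succ j' =>
        rw [eStat_cons_false, eStat_cons_false, ih j' h]

/-! ### the set of common `N` steps -/

/-- The positions of the common `N` steps of `w` and `Q`. -/
def C (w Q : List Bool) : Finset ℕ :=
  (Finset.range Q.length).filter fun j =>
    w.getD j false = true ∧ Q.getD j false = true ∧
      (w.take j).count true = (Q.take j).count true

lemma iStat_eq_card (w Q : List Bool) : iStat w Q = (C w Q).card := rfl

lemma mem_C {w Q : List Bool} {j : ℕ} :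
    j ∈ C w Q ↔ j < Q.length ∧ w.getD j false = true ∧ Q.getD j false = true ∧
      cnt w j = cnt Q j := by
  unfold C cnt
  rw [Finset.mem_filter, Finset.mem_range]

lemma notAbove_iff {w Q : List Bool} :
    NotAbove w Q ↔ ∀ j, j ≤ Q.length → cnt w j ≤ cnt Q j := by
  unfold NotAbove cnt
  constructor
  · intro h j hj; exact h j (Finset.mem_range.mpr (by omega))
  · intro h j hj; exact h j (by have := Finset.mem_range.mp hj; omega)

/-! ### lists below a path -/

/-- the set of lattice paths below `Q`, as lists -/
def LB (Q : List Bool) : Finset (List Bool) := (pathsBelow Q).image List.ofFn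

lemma mem_LB {Q w : List Bool} :
    w ∈ LB Q ↔ w.length = Q.length ∧ w.count true = Q.count true ∧ NotAbove w Q := by
  unfold LB pathsBelow
  simp only [Finset.mem_image, Finset.mem_filter, Finset.mem_univ, true_and]
  constructor
  · rintro ⟨f, ⟨h1, h2⟩, rfl⟩
    exact ⟨by simp, h1, h2⟩
  · rintro ⟨h0, h1, h2⟩
    refine ⟨fun i => w.get ⟨i, by omega⟩, ?_⟩
    have hw : List.ofFn (fun i : Fin Q.length => w.get ⟨i, by omega⟩) = w := by
      apply List.ext_getElem (by simp [h0])
      intro i hi1 hi2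
      simp [List.getElem_ofFn]
    rw [hw]
    exact ⟨⟨h1, h2⟩, rfl⟩

lemma W_eq (Q : List Bool) (x y : ℤ) :
    W Q x y = ∑ w ∈ LB Q, x ^ iStat w Q * y ^ eStat w := by
  unfold W LB
  rw [Finset.sum_image]
  intro f _ g _ h
  exact List.ofFn_inj.mp h

/-! ### appending an E step to `P` -/

lemma cnt_PE (P : List Bool) (j : ℕ) : cnt (P ++ [false]) j = cnt P j := by
  by_cases h : j ≤ P.length
  · unfold cnt
    rw [List.take_append_of_le_length h]
  · rw [cnt_length _ (by simp; omega), cnt_length _ (by omega)]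
    simp

lemma getD_PE (P : List Bool) (j : ℕ) :
    (P ++ [false]).getD j false = P.getD j false := by
  rcases lt_trichotomy j P.length with h | h | h
  · rw [List.getD_eq_getElem?_getD, List.getD_eq_getElem?_getD, List.getElem?_append_left h]
  · subst h
    rw [List.getD_eq_getElem?_getD, List.getElem?_append_right le_rfl]
    simp [List.getD_eq_getElem?_getD, List.getElem?_eq_none (le_refl P.length)]
  · rw [List.getD_eq_getElem?_getD, List.getD_eq_getElem?_getD,
      List.getElem?_eq_none (by simp; omega), List.getElem?_eq_none (by omega)]

lemma C_PE (w P : List Bool) : C w (P ++ [false]) = C w P := by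
  ext j
  rw [mem_C, mem_C]
  constructor
  · rintro ⟨hj, h1, h2, h3⟩
    rw [getD_PE] at h2
    have hjl : j < P.length := by
      by_contra hc
      rw [List.getD_eq_getElem?_getD, List.getElem?_eq_none (by omega)] at h2
      simp at h2
    rw [cnt_PE] at h3
    exact ⟨hjl, h1, h2, h3⟩
  · rintro ⟨hj, h1, h2, h3⟩
    refine ⟨by simp; omega, h1, ?_, ?_⟩
    · rw [getD_PE]; exact h2
    · rw [cnt_PE]; exact h3

lemma count_PE (P : List Bool) : (P ++ [false]).count true = P.count true := by simp

/-! ### structure of paths below `P ++ [false]` -/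

/-- the allowed insertion slots -/
def D (w P : List Bool) : Finset ℕ := insert 0 ((C w P).image (· + 1))

lemma mem_D_le {w P : List Bool} {p : ℕ} (hp : p ∈ D w P) : p ≤ P.length := by
  rcases Finset.mem_insert.mp hp with h | h
  · omega
  · obtain ⟨j, hj, rfl⟩ := Finset.mem_image.mp h
    have := (mem_C.mp hj).1
    omega

section Main

variable {P : List Bool}

/-- key computation: the common steps of `ins w p` with `P` are the commons of `w` below `p`. -/
lemma C_ins {w : List Bool} (hlen : w.length = P.length)
    (hNA : ∀ j, j ≤ P.length → cnt w j ≤ cnt P j) {p : ℕ} (hp : p ≤ P.length) :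
    C (ins w p) P = (C w P).filter (· < p) := by
  have hp' : p ≤ w.length := by omega
  ext m
  rw [Finset.mem_filter, mem_C, mem_C]
  rcases lt_trichotomy m p with h | h | h
  · rw [getD_ins_of_lt w hp' h, cnt_ins_of_le w hp' h.le]
    constructor
    · rintro ⟨h1, h2, h3, h4⟩; exact ⟨⟨h1, h2, h3, h4⟩, h⟩
    · rintro ⟨⟨h1, h2, h3, h4⟩, _⟩; exact ⟨h1, h2, h3, h4⟩
  · subst h
    rw [getD_ins_self w hp']
    constructor
    · rintro ⟨_, h1, _⟩; simp at h1
    · rintro ⟨_, h⟩; omega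
  · constructor
    · rintro ⟨h0, h1, h2, h3⟩
      exfalso
      rw [getD_ins_of_gt w hp' h] at h1
      rw [cnt_ins_of_gt w hp' h] at h3
      have hm : m ≤ P.length := by omega
      have : cnt w m = cnt w (m - 1) + 1 := by
        obtain ⟨n, rfl⟩ : ∃ n, m = n + 1 := ⟨m - 1, by omega⟩
        rw [cnt_succ_true w (by simpa using h1)]
        simp
      have := hNA m hm
      omega
    · rintro ⟨_, h'⟩; omega

/-- no common step at position 0 means the path starts with an E step. -/
lemma start_false {b : List Bool} (hlen : b.length = P.length + 1)
    (hNA : ∀ j, j ≤ P.length + 1 → cnt b j ≤ cnt P j)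
    (hC : C b P = ∅) : b.getD 0 false = false := by
  by_contra hc
  have hb0 : b.getD 0 false = true := by
    cases h : b.getD 0 false
    · exact absurd h hc
    · rfl
  have h1 : cnt b 1 = 1 := by rw [cnt_succ_true b hb0, cnt_zero]
  have h2 : cnt P 1 ≥ 1 := by have := hNA 1 (by omega); omega
  have hP0 : P.getD 0 false = true := by
    by_contra hP
    have : P.getD 0 false = false := by
      cases h : P.getD 0 false
      · rfl
      · exact absurd h hP
    rw [cnt_succ_false P this, cnt_zero] at h2
    omega
  have hlenP : 0 < P.length := by
    by_contra h
    rw [List.getD_eq_getElem?_getD, List.getElem?_eq_none (by omega)] at hP0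
    simp at hP0
  have : (0 : ℕ) ∈ C b P := mem_C.mpr ⟨hlenP, hb0, hP0, rfl⟩
  rw [hC] at this
  simp at this

/-- the step right after the last common step is an E step. -/
lemma after_max_false {b : List Bool} (hlen : b.length = P.length + 1)
    (hNA : ∀ j, j ≤ P.length + 1 → cnt b j ≤ cnt P j)
    (hne : (C b P).Nonempty) :
    b.getD ((C b P).max' hne + 1) false = false := by
  set jm := (C b P).max' hne with hjm
  obtain ⟨hjml, hbj, hPj, hcj⟩ := mem_C.mp ((C b P).max'_mem hne)
  by_contra hc
  have hb1 : b.getD (jm + 1) false = true := by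
    cases h : b.getD (jm + 1) false
    · exact absurd h hc
    · rfl
  have e1 : cnt b (jm + 1) = cnt P (jm + 1) := by
    rw [cnt_succ_true b hbj, cnt_succ_true P hPj, hcj]
  have e2 : cnt b (jm + 2) = cnt P (jm + 1) + 1 := by
    rw [cnt_succ_true b hb1, e1]
  have h3 : cnt P (jm + 1) + 1 ≤ cnt P (jm + 2) := by
    have := hNA (jm + 2) (by omega)
    omega
  have hP1 : P.getD (jm + 1) false = true := by
    by_contra hP
    have hPf : P.getD (jm + 1) false = false := by
      cases h : P.getD (jm + 1) false
      · rfl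
      · exact absurd h hP
    rw [cnt_succ_false P hPf] at h3
    omega
  have hl1 : jm + 1 < P.length := by
    by_contra h
    rw [List.getD_eq_getElem?_getD, List.getElem?_eq_none (by omega)] at hP1
    simp at hP1
  have : jm + 1 ∈ C b P := mem_C.mpr ⟨hl1, hb1, hP1, e1⟩
  have := (C b P).le_max' _ this
  omega

/-- after the last common step, the path stays strictly below. -/
lemma strict_below {b : List Bool} (hlen : b.length = P.length + 1)
    (hNA : ∀ j, j ≤ P.length + 1 → cnt b j ≤ cnt P j)
    {q : ℕ} (hq : q ≤ P.length) (hbase : cnt b (q + 1) ≤ cnt P q)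
    (hno : ∀ m ∈ C b P, m < q) :
    ∀ n, q ≤ n → n ≤ P.length → cnt b (n + 1) ≤ cnt P n := by
  intro n
  induction n with
  | zero =>
    intro h1 _
    have hq0 : q = 0 := by omega
    rw [hq0] at hbase
    exact hbase
  | succ n ih =>
    intro h1 h2
    rcases Nat.eq_or_lt_of_le h1 with h | h
    · rw [← h]; exact hbase
    · have hn : q ≤ n := by omega
      have ihn := ih hn (by omega)
      cases hb : b.getD (n + 1) false with
      | false =>
        rw [cnt_succ_false b hb]
        exact ihn.trans (cnt_mono P (by omega))
      | true =>
        rw [cnt_succ_true b hb]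
        by_contra hcon
        have e0 : cnt b (n + 1) = cnt P (n + 1) := by
          have := cnt_mono P (le_of_lt (by omega : n < n + 1))
          omega
        have h3 : cnt P (n + 1) + 1 ≤ cnt P (n + 2) := by
          have := hNA (n + 2) (by omega)
          rw [cnt_succ_true b hb, e0] at this
          omega
        have hP1 : P.getD (n + 1) false = true := by
          by_contra hP
          have hPf : P.getD (n + 1) false = false := by
            cases h : P.getD (n + 1) false
            · rfl
            · exact absurd h hP
          rw [cnt_succ_false P hPf] at h3
          omega
        have hl1 : n + 1 < P.length := by
          by_contra h
          rw [List.getD_eq_getElem?_getD, List.getElem?_eq_none (by omega)] at hP1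
          simp at hP1
        have : n + 1 ∈ C b P := mem_C.mpr ⟨hl1, hb, hP1, e0⟩
        have := hno _ this
        omega

/-- the canonical deletion position of a path below `P ++ [false]`. -/
def pos (b P : List Bool) : ℕ :=
  if h : (C b P).Nonempty then (C b P).max' h + 1 else 0

/-- all the facts about the backward map. -/
lemma back {b : List Bool} (hb : b ∈ LB (P ++ [false])) :
    pos b P ≤ P.length ∧ b.getD (pos b P) false = false ∧
      del b (pos b P) ∈ LB P ∧ pos b P ∈ D (del b (pos b P)) P := by
  obtain ⟨hlen, hcnt, hNA0⟩ := mem_LB.mp hb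
  rw [List.length_append] at hlen
  simp only [List.length_singleton] at hlen
  rw [count_PE] at hcnt
  have hNA : ∀ j, j ≤ P.length + 1 → cnt b j ≤ cnt P j := by
    intro j hj
    have := (notAbove_iff.mp hNA0) j (by simp; omega)
    rwa [cnt_PE] at this
  set q := pos b P with hq
  -- q ≤ P.length and b.getD q = false, plus strict below bound
  have key : q ≤ P.length ∧ b.getD q false = false ∧
      (∀ m ∈ C b P, m < q) ∧ cnt b (q + 1) ≤ cnt P q := by
    unfold pos at hq
    split_ifs at hq with h
    · obtain ⟨hjml, hbj, hPj, hcj⟩ := mem_C.mp ((C b P).max'_mem h)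
      have hf := after_max_false hlen hNA h
      rw [← hq] at hf
      refine ⟨by omega, hf, ?_, ?_⟩
      · intro m hm
        have := (C b P).le_max' m hm
        omega
      · have e := cnt_succ_false b hf
        rw [e, hq, cnt_succ_true b hbj, hcj, ← cnt_succ_true P hPj]
    · have hCe : C b P = ∅ := Finset.not_nonempty_iff_eq_empty.mp h
      have hf := start_false hlen hNA hCe
      rw [hq]
      refine ⟨by omega, hf, ?_, ?_⟩
      · intro m hm; rw [hCe] at hm; simp at hm
      · rw [cnt_succ_false b hf, cnt_zero]; omega
  obtain ⟨hqle, hqf, hno, hbase⟩ := key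
  have hqlt : q < b.length := by omega
  have hid : ins (del b q) q = b := ins_del b hqlt hqf
  have hlend : (del b q).length = P.length := by rw [length_del b hqlt]; omega
  have hqd : q ≤ (del b q).length := by omega
  -- cnt of the deleted path
  have hcd_le : ∀ m, m ≤ q → cnt (del b q) m = cnt b m := by
    intro m hm
    conv_rhs => rw [← hid]
    rw [cnt_ins_of_le (del b q) hqd hm]
  have hcd_gt : ∀ m, q ≤ m → cnt (del b q) m = cnt b (m + 1) := by
    intro m hm
    conv_rhs => rw [← hid]
    rw [cnt_ins_of_gt (del b q) hqd (by omega)]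
    simp
  have hdNA : ∀ j, j ≤ P.length → cnt (del b q) j ≤ cnt P j := by
    intro j hj
    rcases le_or_gt j q with h | h
    · rw [hcd_le j h]; exact hNA j (by omega)
    · rw [hcd_gt j (by omega)]
      exact strict_below hlen hNA hqle hbase hno j (by omega) hj
  have hdmem : del b q ∈ LB P := by
    rw [mem_LB]
    refine ⟨hlend, ?_, ?_⟩
    · have : (ins (del b q) q).count true = (del b q).count true := count_ins _ _
      rw [hid] at this
      omega
    · rw [notAbove_iff]; exact hdNA
  refine ⟨hqle, hqf, hdmem, ?_⟩
  -- q ∈ D (del b q) P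
  unfold pos at hq
  split_ifs at hq with h
  · set jm := (C b P).max' h with hjm
    obtain ⟨hjml, hbj, hPj, hcj⟩ := mem_C.mp ((C b P).max'_mem h)
    have hjmq : jm < q := by omega
    have hjmC : jm ∈ C (del b q) P := by
      rw [mem_C]
      refine ⟨hjml, ?_, hPj, ?_⟩
      · have hbj' : (ins (del b q) q).getD jm false = true := by rw [hid]; exact hbj
        rwa [getD_ins_of_lt (del b q) hqd hjmq] at hbj'
      · have hcj' : cnt (ins (del b q) q) jm = cnt P jm := by rw [hid]; exact hcj
        rwa [cnt_ins_of_le (del b q) hqd hjmq.le] at hcj'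
    exact Finset.mem_insert.mpr (Or.inr (Finset.mem_image.mpr ⟨jm, hjmC, hq.symm⟩))
  · unfold D
    rw [hq]
    exact Finset.mem_insert_self 0 _

/-- forward map lands in `LB (P ++ [false])`. -/
lemma ins_mem {w : List Bool} (hw : w ∈ LB P) {p : ℕ} (hp : p ∈ D w P) :
    ins w p ∈ LB (P ++ [false]) := by
  obtain ⟨hlen, hcnt, hNA0⟩ := mem_LB.mp hw
  have hNA := notAbove_iff.mp hNA0
  have hpl : p ≤ P.length := mem_D_le hp
  have hpw : p ≤ w.length := by omega
  rw [mem_LB]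
  refine ⟨?_, ?_, ?_⟩
  · rw [length_ins w hpw]
    simp [hlen]
  · rw [count_ins, count_PE]
    exact hcnt
  · rw [notAbove_iff]
    intro j hj
    rw [cnt_PE]
    have hjl : j ≤ P.length + 1 := by simpa using hj
    rcases le_or_gt j p with h | h
    · rw [cnt_ins_of_le w hpw h]
      exact hNA j (by omega)
    · rw [cnt_ins_of_gt w hpw h]
      calc cnt w (j - 1) ≤ cnt P (j - 1) := hNA _ (by omega)
        _ ≤ cnt P j := cnt_mono P (by omega)

/-- `pos` recovers the insertion slot. -/
lemma pos_ins {w : List Bool} (hw : w ∈ LB P) {p : ℕ} (hp : p ∈ D w P) :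
    pos (ins w p) P = p := by
  obtain ⟨hlen, hcnt, hNA0⟩ := mem_LB.mp hw
  have hNA := notAbove_iff.mp hNA0
  have hpl : p ≤ P.length := mem_D_le hp
  have hCi : C (ins w p) P = (C w P).filter (· < p) := C_ins hlen hNA hpl
  rcases Finset.mem_insert.mp hp with h | h
  · subst h
    have : C (ins w 0) P = ∅ := by
      rw [hCi]
      ext m
      simp
    unfold pos
    rw [this]
    simp
  · obtain ⟨j, hj, rfl⟩ := Finset.mem_image.mp h
    have hji : j ∈ (C w P).filter (· < j + 1) :=
      Finset.mem_filter.mpr ⟨hj, by omega⟩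
    have hne : (C (ins w (j+1)) P).Nonempty := by
      rw [hCi]; exact ⟨j, hji⟩
    unfold pos
    rw [dif_pos hne]
    congr 1
    apply le_antisymm
    · apply Finset.max'_le
      intro m hm
      rw [hCi] at hm
      have := (Finset.mem_filter.mp hm).2
      omega
    · apply Finset.le_max'
      rw [hCi]
      exact hji

/-- the master bijection: summing over paths below `P ++ [false]` is summing over
paths below `P` together with an admissible insertion slot. -/
lemma sum_PE (g : List Bool → ℤ) :
    ∑ b ∈ LB (P ++ [false]), g b = ∑ w ∈ LB P, ∑ p ∈ D w P, g (ins w p) := by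
  rw [Finset.sum_sigma']
  symm
  refine Finset.sum_bij' (fun a _ => ins a.1 a.2) (fun b _ => ⟨del b (pos b P), pos b P⟩)
    ?_ ?_ ?_ ?_ ?_
  · rintro ⟨w, p⟩ ha
    rw [Finset.mem_sigma] at ha
    exact ins_mem ha.1 ha.2
  · intro b hb
    obtain ⟨h1, h2, h3, h4⟩ := back hb
    rw [Finset.mem_sigma]
    exact ⟨h3, h4⟩
  · rintro ⟨w, p⟩ ha
    rw [Finset.mem_sigma] at ha
    obtain ⟨hw, hp⟩ := ha
    obtain ⟨hlen, _, _⟩ := mem_LB.mp hw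
    have hpw : p ≤ w.length := by rw [hlen]; exact mem_D_le hp
    have h1 : pos (ins w p) P = p := pos_ins hw hp
    have h2 : del (ins w p) p = w := del_ins w hpw
    simp only [h1, h2]
  · intro b hb
    obtain ⟨h1, h2, h3, h4⟩ := back hb
    obtain ⟨hlen, _, _⟩ := mem_LB.mp hb
    have hql : pos b P < b.length := by
      rw [hlen, List.length_append]
      simp only [List.length_singleton]
      omega
    exact ins_del b hql h2
  · rintro ⟨w, p⟩ _
    rfl

/-- the weight of each inserted path. -/
lemma weight_ins {w : List Bool} (hw : w ∈ LB P) (x y : ℤ) :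
    ∑ p ∈ D w P, x ^ iStat (ins w p) (P ++ [false]) * y ^ eStat (ins w p)
      = y ^ (eStat w + 1)
        + ∑ j ∈ C w P, x ^ ((C w P).filter (· ≤ j)).card * y ^ eStat w := by
  obtain ⟨hlen, hcnt, hNA0⟩ := mem_LB.mp hw
  have hNA := notAbove_iff.mp hNA0
  unfold D
  rw [Finset.sum_insert (by
    intro h
    obtain ⟨j, _, hj⟩ := Finset.mem_image.mp h
    omega)]
  rw [Finset.sum_image (by intro a _ b _ h; simp only at h; omega)]
  congr 1
  · -- term for p = 0
    rw [iStat_eq_card, C_PE, C_ins hlen hNA (by omega), ins_zero, eStat_cons_false]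
    have : ((C w P).filter (· < 0)) = ∅ := by ext m; simp
    rw [this]
    simp
  · apply Finset.sum_congr rfl
    intro j hj
    obtain ⟨hjl, hwj, hPj, hcj⟩ := mem_C.mp hj
    rw [iStat_eq_card, C_PE, C_ins hlen hNA (by omega), eStat_ins w j hwj]
    congr 2
    apply congr_arg
    apply Finset.filter_congr
    intro m _
    simp [Nat.lt_succ_iff]

/-! ### the rank sum -/

lemma rank_sum (x : ℤ) : ∀ (n : ℕ) (s : Finset ℕ), s.card = n →
    ∑ j ∈ s, x ^ (s.filter (· ≤ j)).card = ∑ k ∈ Finset.range n, x ^ (k + 1) := by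
  intro n
  induction n with
  | zero =>
    intro s hs
    rw [Finset.card_eq_zero.mp hs]
    simp
  | succ n ih =>
    intro s hs
    have hne : s.Nonempty := Finset.card_pos.mp (by omega)
    set m := s.max' hne with hm
    have hms : m ∈ s := s.max'_mem hne
    rw [← Finset.sum_erase_add s _ hms]
    have h1 : s.filter (· ≤ m) = s := by
      apply Finset.filter_true_of_mem
      intro j hj
      exact s.le_max' j hj
    have h2 : ∀ j ∈ s.erase m, (s.filter (· ≤ j)).card = ((s.erase m).filter (· ≤ j)).card := by
      intro j hj
      congr 1
      ext a
      simp only [Finset.mem_filter, Finset.mem_erase]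
      constructor
      · rintro ⟨ha, haj⟩
        have hjm : j < m := by
          have := s.le_max' j (Finset.mem_erase.mp hj).2
          have := (Finset.mem_erase.mp hj).1
          omega
        exact ⟨⟨by omega, ha⟩, haj⟩
      · rintro ⟨⟨_, ha⟩, haj⟩
        exact ⟨ha, haj⟩
    rw [Finset.sum_congr rfl (fun j hj => by rw [h2 j hj])]
    rw [ih (s.erase m) (by rw [Finset.card_erase_of_mem hms]; omega)]
    rw [h1, hs, Finset.sum_range_succ]

lemma key_sum (s : Finset ℕ) (x : ℤ) :
    (x - 1) * ∑ j ∈ s, x ^ (s.filter (· ≤ j)).card = x ^ (s.card + 1) - x := by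
  rw [rank_sum x s.card s rfl]
  have : ∑ k ∈ Finset.range s.card, x ^ (k + 1)
      = x * ∑ k ∈ Finset.range s.card, x ^ k := by
    rw [Finset.mul_sum]
    apply Finset.sum_congr rfl
    intro k _
    ring
  rw [this]
  have hg : (∑ k ∈ Finset.range s.card, x ^ k) * (x - 1) = x ^ s.card - 1 :=
    geom_sum_mul x s.card
  calc (x - 1) * (x * ∑ k ∈ Finset.range s.card, x ^ k)
      = x * ((∑ k ∈ Finset.range s.card, x ^ k) * (x - 1)) := by ring
    _ = x * (x ^ s.card - 1) := by rw [hg]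
    _ = x ^ (s.card + 1) - x := by ring

end Main

end Stmt4Aux

/-- the effect on `W` of appending an East step. -/
theorem stmt4 (P : List Bool) (x y : ℤ) :
    W (P ++ [false]) x y * (x - 1) =
      x * (W P x y - W P 1 y) + (x - 1) * y * W P 1 y := by
  classical
  open Stmt4Aux in
  have hW1 : W (P ++ [false]) x y
      = ∑ w ∈ LB P, (y ^ (eStat w + 1)
          + ∑ j ∈ C w P, x ^ ((C w P).filter (· ≤ j)).card * y ^ eStat w) := by
    rw [W_eq, sum_PE (fun b => x ^ iStat b (P ++ [false]) * y ^ eStat b)]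
    exact Finset.sum_congr rfl fun w hw => weight_ins hw x y
  rw [hW1, Stmt4Aux.W_eq P x y, Stmt4Aux.W_eq P 1 y]
  rw [Finset.sum_mul, ← Finset.sum_sub_distrib, Finset.mul_sum, Finset.mul_sum, ← Finset.sum_add_distrib]
  apply Finset.sum_congr rfl
  intro w _
  have hkey := Stmt4Aux.key_sum (Stmt4Aux.C w P) x
  have hi : iStat w P = (Stmt4Aux.C w P).card := Stmt4Aux.iStat_eq_card w P
  rw [hi]
  have expand : (y ^ (eStat w + 1)
      + ∑ j ∈ Stmt4Aux.C w P, x ^ ((Stmt4Aux.C w P).filter (· ≤ j)).card * y ^ eStat w)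
        * (x - 1)
      = y ^ (eStat w + 1) * (x - 1)
        + ((x - 1) * ∑ j ∈ Stmt4Aux.C w P,
            x ^ ((Stmt4Aux.C w P).filter (· ≤ j)).card) * y ^ eStat w := by
    rw [← Finset.sum_mul]
    ring
  rw [expand, hkey]
  ring
end

section
/- For all positive integers k, l and all n ≥ 0, the number of lattice paths from (0,0) to (ln, kn) that never go above (N^k E^l)^n equals the number of lattice paths from (0,0) to (kn, ln) that never go above (N^l E^k)^n. -/
open Finset

def sig (w : List Bool) : List Bool := w.reverse.map not

@[simp] lemma sig_length (w : List Bool) : (sig w).length = w.length := by simp [sig]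

lemma count_true_map_not (w : List Bool) : (w.map not).count true = w.count false := by
  simp [List.count, List.countP_map, Function.comp_def]

lemma count_false_eq (w : List Bool) : w.count false = w.length - w.count true := by
  induction w with
  | nil => simp
  | cons a t ih =>
    have : t.count true ≤ t.length := List.count_le_length
    cases a <;> simp [ih, List.count_cons] <;> omega

lemma sig_sig (w : List Bool) : sig (sig w) = w := by
  simp [sig, List.map_reverse, Function.comp_def]

lemma count_true_sig (w : List Bool) : (sig w).count true = w.length - w.count true := by
  rw [sig, count_true_map_not, List.count_reverse, count_false_eq]

lemma take_sig (w : List Bool) (j : ℕ) (hj : j ≤ w.length) :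
    (sig w).take j = sig (w.drop (w.length - j)) := by
  rw [sig, ← List.map_take, List.take_reverse, sig]

lemma count_take_sig (w : List Bool) (j : ℕ) (hj : j ≤ w.length) :
    ((sig w).take j).count true + w.count true
      = j + (w.take (w.length - j)).count true := by
  rw [take_sig w j hj, count_true_sig]
  have h1 : (w.take (w.length - j)).count true + (w.drop (w.length - j)).count true
      = w.count true := by
    rw [← List.count_append, List.take_append_drop]
  have h2 : (w.drop (w.length - j)).count true ≤ (w.drop (w.length - j)).length :=
    List.count_le_length
  have h3 : (w.drop (w.length - j)).length = j := by simp; omega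
  omega

lemma notAbove_sig (w P : List Bool) (hw : w.length = P.length)
    (hc : w.count true = P.count true) (h : NotAbove w P) :
    NotAbove (sig w) (sig P) := by
  intro j hj
  simp only [Finset.mem_range, sig_length] at hj ⊢
  have hjP : j ≤ P.length := by omega
  have h1 := count_take_sig w j (by omega)
  have h2 := count_take_sig P j hjP
  have h3 := h (P.length - j) (by simp)
  rw [hw] at h1
  omega

lemma notAbove_sig_iff (w P : List Bool) (hw : w.length = P.length)
    (hc : w.count true = P.count true) :
    NotAbove w P ↔ NotAbove (sig w) (sig P) := by
  refine ⟨notAbove_sig w P hw hc, fun h => ?_⟩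
  have h2 := notAbove_sig (sig w) (sig P) (by simp [hw])
    (by rw [count_true_sig, count_true_sig, hw, hc]) h
  rwa [sig_sig, sig_sig] at h2

lemma flatten_replicate_succ' {α} (n : ℕ) (x : List α) :
    (List.replicate (n+1) x).flatten = (List.replicate n x).flatten ++ x := by
  induction n with
  | zero => simp
  | succ m ih =>
    conv_lhs => rw [List.replicate_succ, List.flatten_cons, ih]
    rw [← List.append_assoc, ← List.flatten_cons, ← List.replicate_succ]

lemma sig_flatten_replicate (n : ℕ) (x : List Bool) :
    sig (List.replicate n x).flatten = (List.replicate n (sig x)).flatten := by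
  induction n with
  | zero => simp [sig]
  | succ m ih =>
    rw [List.replicate_succ, List.flatten_cons]
    show ((x ++ (List.replicate m x).flatten).reverse).map not = _
    rw [List.reverse_append, List.map_append]
    show (List.replicate m x).flatten.reverse.map not ++ sig x = _
    rw [show ((List.replicate m x).flatten.reverse.map not) = sig (List.replicate m x).flatten
        from rfl, ih, ← flatten_replicate_succ']

lemma sig_zigzag (k l n : ℕ) : sig (zigzag k l n) = zigzag l k n := by
  rw [zigzag, sig_flatten_replicate, zigzag]
  congr 2
  simp [sig, List.reverse_append, List.map_replicate]

lemma ofFn_sig {m p : ℕ} (h : m = p) (f : Fin p → Bool) :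
    List.ofFn (fun i : Fin m => ! f ((Fin.cast h i).rev)) = sig (List.ofFn f) := by
  apply List.ext_getElem
  · simp [h]
  intro i h1 h2
  simp only [List.getElem_ofFn, sig, List.getElem_map, List.getElem_reverse,
    List.length_ofFn, Fin.rev, Fin.cast]
  have e : p - (i + 1) = p - 1 - i := by omega
  simp [e]

lemma mem_pathsBelow_sig (q : List Bool) (hq : (sig q).length = q.length)
    (f : Fin q.length → Bool) (hf : f ∈ pathsBelow q) :
    (fun i : Fin (sig q).length => ! f ((Fin.cast hq i).rev)) ∈ pathsBelow (sig q) := by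
  simp only [pathsBelow, Finset.mem_filter, Finset.mem_univ, true_and] at hf ⊢
  rw [ofFn_sig hq f]
  obtain ⟨hc, hna⟩ := hf
  have hw : (List.ofFn f).length = q.length := by simp
  refine ⟨?_, notAbove_sig _ _ hw hc hna⟩
  rw [count_true_sig, count_true_sig, hw, hc]

lemma card_pathsBelow_sig (P : List Bool) :
    (pathsBelow P).card = (pathsBelow (sig P)).card := by
  have hL : (sig P).length = P.length := sig_length P
  refine Finset.card_bij (fun f _ => fun i : Fin (sig P).length => ! f ((Fin.cast hL i).rev))
    (fun f hf => mem_pathsBelow_sig P hL f hf) (fun f hf f' hf' h => ?_) (fun g hg => ?_)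
  · funext x
    have h2 := congrFun h (Fin.cast hL.symm x.rev)
    have e : (Fin.cast hL (Fin.cast hL.symm x.rev)).rev = x := by
      apply Fin.ext; simp [Fin.rev, Fin.cast]; omega
    rw [e] at h2
    simpa using h2
  · refine ⟨fun i : Fin P.length => ! g ((Fin.cast hL.symm i).rev), ?_, ?_⟩
    · simp only [pathsBelow, Finset.mem_filter, Finset.mem_univ, true_and] at hg ⊢
      rw [ofFn_sig hL.symm g]
      obtain ⟨hc, hna⟩ := hg
      have hw : (List.ofFn g).length = (sig P).length := by simp
      have h1 := notAbove_sig _ _ hw hc hna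
      rw [sig_sig] at h1
      refine ⟨?_, h1⟩
      rw [count_true_sig, hw, hc, count_true_sig, hL]
      have : P.count true ≤ P.length := List.count_le_length
      omega
    · funext i
      have e : (Fin.cast hL.symm (Fin.cast hL i).rev).rev = i := by
        apply Fin.ext; simp [Fin.rev, Fin.cast]; omega
      simp [e]

/-- symmetry between `(N^k E^l)^n` and `(N^l E^k)^n`. -/
theorem stmt7 (k l n : ℕ) (hk : 0 < k) (hl : 0 < l) :
    (pathsBelow (zigzag k l n)).card = (pathsBelow (zigzag l k n)).card := by
  rw [card_pathsBelow_sig (zigzag k l n), sig_zigzag]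
end

section
/- Let l ≥ 1, let w_1, ..., w_l be pairwise distinct elements of a field with each w_j ≠ 1, and suppose the values w_j/(w_j - 1) are pairwise distinct. If c_0, c_1, ..., c_{l-1} are field elements satisfying Σ_{i=0}^{l-1} c_{l-1-i} · (w_j/(w_j-1))^i = w_j − 1 for all j = 1, ..., l, then c_0 = −Π_{j=1}^l (1 − w_j). -/
/-!
Put `x_j = w_j / (w_j - 1)`, so that `(x_j - 1)(w_j - 1) = 1`, and `p = ∑ c_{l-1-i} X^i`.
The system says `p(x_j) (x_j - 1) = 1`, so `p (X - 1) - 1`, of degree `≤ l` with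
`X^l`-coefficient `c_0`, vanishes at the `l` distinct nodes `x_j` and hence equals
`c_0 ∏ (X - x_j)`. At `X = 1` this reads `-1 = c_0 ∏ (1 - x_j) = c_0 ∏ (1 - w_j)⁻¹`.
-/

open Finset

open Polynomial

namespace Polynomial

variable {R : Type*} [CommRing R]

theorem coeff_sum_range_C_mul_X_pow (a : ℕ → R) (n m : ℕ) :
    (∑ i ∈ range n, C (a i) * X ^ i).coeff m = if m < n then a m else 0 := by
  simp [finsetSum_coeff]

theorem degree_sum_range_C_mul_X_pow_lt (a : ℕ → R) (n : ℕ) :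
    (∑ i ∈ range n, C (a i) * X ^ i).degree < (n : WithBot ℕ) := by
  rw [degree_lt_iff_coeff_zero]
  intro m hm
  rw [coeff_sum_range_C_mul_X_pow, if_neg hm.not_gt]

variable [IsDomain R] {ι : Type*} {s : Finset ι} {v : ι → R}

theorem eq_C_coeff_mul_nodal_of_eval_eq_zero (hvs : Set.InjOn v s) {f : R[X]}
    (hdeg : f.degree ≤ #s) (hf : ∀ i ∈ s, f.eval (v i) = 0) :
    f = C (f.coeff #s) * Lagrange.nodal s v := by
  refine eq_of_degree_sub_lt_of_eval_index_eq s hvs ?_ fun i hi => ?_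
  · rw [degree_lt_iff_coeff_zero]
    intro m hm
    rcases hm.eq_or_lt with rfl | hlt
    · rw [coeff_sub, coeff_C_mul, ← Lagrange.natDegree_nodal (v := v),
        Lagrange.nodal_monic.coeff_natDegree, Lagrange.natDegree_nodal, mul_one, sub_self]
    · rw [coeff_sub, coeff_C_mul,
        coeff_eq_zero_of_degree_lt (hdeg.trans_lt (by exact_mod_cast hlt)),
        coeff_eq_zero_of_natDegree_lt (Lagrange.natDegree_nodal.trans_lt hlt), mul_zero, sub_zero]
  · rw [hf i hi, eval_mul, Lagrange.eval_nodal_at_node hi, mul_zero]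

theorem coeff_mul_prod_one_sub_eq_neg_one (hs : s.Nonempty) (hvs : Set.InjOn v s) {p : R[X]}
    (hdeg : p.degree < #s) (hp : ∀ i ∈ s, p.eval (v i) * (v i - 1) = 1) :
    p.coeff (#s - 1) * ∏ i ∈ s, (1 - v i) = -1 := by
  set q : R[X] := p * (X - C 1) - 1
  obtain ⟨n, hn⟩ : ∃ n, #s = n + 1 := ⟨#s - 1, (Nat.succ_pred_eq_of_pos hs.card_pos).symm⟩
  rw [degree_lt_iff_coeff_zero] at hdeg
  have hq_coeff (m : ℕ) : q.coeff (m + 1) = p.coeff m - p.coeff (m + 1) := by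
    rw [coeff_sub, coeff_mul_X_sub_C, coeff_one, if_neg m.succ_ne_zero, mul_one, sub_zero]
  have hq_deg : q.degree ≤ #s := by
    rw [degree_le_iff_coeff_zero]
    intro m hm
    have hm : #s < m := by exact_mod_cast hm
    obtain ⟨m, rfl⟩ : ∃ m', m = m' + 1 := ⟨m - 1, by omega⟩
    rw [hq_coeff, hdeg m (by omega), hdeg (m + 1) (by omega), sub_zero]
  have hq_root (i : ι) (hi : i ∈ s) : q.eval (v i) = 0 := by
    simp [q, hp i hi]
  have hq := congrArg (eval 1) (eq_C_coeff_mul_nodal_of_eval_eq_zero hvs hq_deg hq_root)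
  rw [hn, hq_coeff, hdeg (n + 1) hn.le, sub_zero] at hq
  simp only [q, eval_sub, eval_mul, eval_X, eval_C, eval_one, sub_self, mul_zero, zero_sub,
    Lagrange.eval_nodal] at hq
  rw [hn, Nat.add_sub_cancel, ← hq]

end Polynomial

theorem stmt13_general {F : Type*} [Field F] (l : ℕ) (hl : 1 ≤ l) (w : Fin l → F)
    (hw1 : ∀ j, w j ≠ 1)
    (hdist : Function.Injective fun j => w j / (w j - 1))
    (c : ℕ → F)
    (hc : ∀ j, ∑ i ∈ Finset.range l, c (l - 1 - i) * (w j / (w j - 1)) ^ i = w j - 1) :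
    c 0 = -∏ j, (1 - w j) := by
  have hw_sub_one (j : Fin l) : w j - 1 ≠ 0 := sub_ne_zero.mpr (hw1 j)
  have hx_sub_one (j : Fin l) : w j / (w j - 1) - 1 = (w j - 1)⁻¹ := by
    rw [div_sub_one (hw_sub_one j), sub_sub_cancel, one_div]
  set p : F[X] := ∑ i ∈ range l, C (c (l - 1 - i)) * X ^ i
  have hp_coeff : p.coeff (#(univ : Finset (Fin l)) - 1) = c 0 := by
    rw [card_fin, coeff_sum_range_C_mul_X_pow, if_pos (by omega), Nat.sub_self]
  have hp_eval (j : Fin l) : p.eval (w j / (w j - 1)) * (w j / (w j - 1) - 1) = 1 := by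
    simp only [p, eval_finsetSum, eval_mul, eval_C, eval_pow, eval_X, hc, hx_sub_one]
    exact mul_inv_cancel₀ (hw_sub_one j)
  have hc0 := coeff_mul_prod_one_sub_eq_neg_one (univ_nonempty_iff.mpr ⟨⟨0, hl⟩⟩)
    hdist.injOn (by simpa using degree_sum_range_C_mul_X_pow_lt _ l) fun j _ => hp_eval j
  have hone_sub (j : Fin l) : 1 - w j / (w j - 1) = (1 - w j)⁻¹ := by
    rw [← neg_sub, hx_sub_one, ← inv_neg, neg_sub]
  have hprod : ∏ j, (1 - w j) ≠ 0 := prod_ne_zero_iff.mpr fun j _ => sub_ne_zero.mpr (hw1 j).symm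
  simp only [hp_coeff, hone_sub, prod_inv_distrib] at hc0
  rw [mul_inv_eq_iff_eq_mul₀ hprod] at hc0
  rw [hc0, neg_one_mul]

/-- solving the linear system of the tennis ball problem. -/
theorem stmt13 {F : Type*} [Field F] (l : ℕ) (hl : 1 ≤ l) (w : Fin l → F)
    (hw : Function.Injective w) (hw1 : ∀ j, w j ≠ 1)
    (hdist : Function.Injective fun j => w j / (w j - 1))
    (c : ℕ → F)
    (hc : ∀ j, ∑ i ∈ Finset.range l, c (l - 1 - i) * (w j / (w j - 1)) ^ i = w j - 1) :
    c 0 = -∏ j, (1 - w j) :=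
  stmt13_general l hl w hw1 hdist c hc
end

section
/- For every n ≥ 0, the number of subsets S ⊆ {1, ..., 2n} of size n that are achievable as the final set of balls outside the basket in the tennis ball problem equals the number of lattice paths from (0,0) to (n,n) never going above (NE)^n. Here a set S of size n is achievable if there is an ordering in which balls can be removed such that (identifying turn j with putting in balls 2j−1, 2j and removing one ball present in the basket) the removed balls are exactly the complement of S. Concretely, S = {a_1 < a_2 < ... < a_n} is achievable if and only if a_j ≤ 2j for all j. -/
open Finset

lemma zigzag11 (n : ℕ) : zigzag 1 1 (n+1) = true :: false :: zigzag 1 1 n := by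
  simp [zigzag, List.replicate_succ]

lemma zz_len (n : ℕ) : (zigzag 1 1 n).length = 2 * n := by
  induction n with
  | zero => simp [zigzag]
  | succ n ih => rw [zigzag11]; simp [ih]; omega

lemma zz_take (n : ℕ) : ∀ j, j ≤ 2*n → ((zigzag 1 1 n).take j).count true = (j+1)/2 := by
  induction n with
  | zero => intro j hj; interval_cases j; simp [zigzag]
  | succ n ih =>
    intro j hj
    rw [zigzag11]
    match j with
    | 0 => simp
    | 1 => simp
    | (j+2) =>
      simp only [List.take_succ_cons, List.count_cons]
      rw [ih j (by omega)]
      simp; omega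

lemma zz_count (n : ℕ) : (zigzag 1 1 n).count true = n := by
  have := zz_take n (2*n) le_rfl
  rwa [List.take_of_length_le (by rw [zz_len]), show (2*n+1)/2 = n by omega] at this

lemma count_take (l : List Bool) :
    ∀ j, j ≤ l.length →
      (l.take j).count true
        = ((Finset.range j).filter fun i => l.getD i false = true).card := by
  intro j
  induction j with
  | zero => simp
  | succ j ih =>
    intro hj
    have hjl : j < l.length := hj
    rw [List.take_succ, List.count_append, ih (le_of_lt hjl),
      Finset.range_add_one, Finset.filter_insert]
    have h1 : l[j]? = some l[j] := List.getElem?_eq_getElem hjl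
    have h2 : l.getD j false = l[j] := by rw [List.getD_eq_getElem?_getD, h1]; rfl
    by_cases hb : l.getD j false = true
    · rw [if_pos hb, Finset.card_insert_of_notMem (by simp)]
      have hlj : l[j] = true := h2 ▸ hb
      simp [h1, hlj]
    · rw [if_neg hb, h1]
      have : l[j] = false := by rw [← h2]; simpa using hb
      simp [this]

lemma sorted_getD_le_iff : ∀ (l : List ℕ), l.Pairwise (· ≤ ·) → ∀ j, j < l.length → ∀ m,
    (l.getD j 0 ≤ m ↔ j + 1 ≤ l.countP (fun x => decide (x ≤ m))) := by
  intro l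
  induction l with
  | nil => simp
  | cons a t ih =>
    intro hs j hj m
    rw [List.pairwise_cons] at hs
    match j with
    | 0 =>
      simp only [List.getD_cons_zero, List.countP_cons]
      constructor
      · intro h; simp [h]
      · intro h
        by_contra ham
        have h0 : t.countP (fun x => decide (x ≤ m)) = 0 :=
          List.countP_eq_zero.2 fun x hx => by
            simp only [decide_eq_true_eq]
            exact fun hxm => ham (le_trans (hs.1 x hx) hxm)
        rw [h0] at h
        simp [ham] at h
    | j+1 =>
      have hjt : j < t.length := by simpa using hj
      simp only [List.getD_cons_succ, List.countP_cons]
      rw [ih hs.2 j hjt m]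
      constructor
      · intro h
        have ha : a ≤ m :=
          le_trans (hs.1 _ (List.getD_eq_getElem t 0 hjt ▸ List.getElem_mem hjt)) ((ih hs.2 j hjt m).2 h)
        rw [if_pos (by simpa using ha)]
        omega
      · intro h
        have : (if (decide (a ≤ m)) = true then 1 else 0) ≤ 1 := by split <;> omega
        omega

lemma cardFilterLeEq (S : Finset ℕ) (m : ℕ) :
    (S.filter (· ≤ m)).card = (S.sort (· ≤ ·)).countP (fun x => decide (x ≤ m)) := by
  rw [Finset.card, Finset.filter_val, ← Multiset.countP_eq_card_filter,
    ← Finset.sort_eq S (· ≤ ·), Multiset.coe_countP]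

lemma ofFn_getD {m : ℕ} (f : Fin m → Bool) (i : ℕ) (h : i < m) (d : Bool) :
    (List.ofFn f).getD i d = f ⟨i, h⟩ := by
  rw [List.getD_eq_getElem?_getD, List.getElem?_eq_getElem (by simpa using h)]
  simp

lemma range_filter_card (n j : ℕ) (S : Finset ℕ) (hS : S ⊆ Finset.Icc 1 (2*n)) (hj : j ≤ 2*n) :
    ((Finset.range j).filter fun i => i + 1 ∈ S).card = (S.filter (· ≤ j)).card := by
  apply Finset.card_nbij' (fun i => i + 1) (fun x => x - 1)
  · intro a ha
    rw [Finset.mem_coe, Finset.mem_filter, Finset.mem_range] at ha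
    rw [Finset.mem_coe, Finset.mem_filter]
    beta_reduce
    exact ⟨ha.2, by omega⟩
  · intro x hx
    rw [Finset.mem_coe, Finset.mem_filter] at hx
    have h1 : 1 ≤ x := (Finset.mem_Icc.1 (hS hx.1)).1
    rw [Finset.mem_coe, Finset.mem_filter, Finset.mem_range]
    beta_reduce
    refine ⟨by omega, ?_⟩
    simpa [show x - 1 + 1 = x by omega] using hx.1
  · intro a _; simp
  · intro x hx
    have h1 : 1 ≤ x := (Finset.mem_Icc.1 (hS (Finset.mem_filter.1 hx).1)).1
    beta_reduce
    omega

lemma main_iff (n : ℕ) (S : Finset ℕ) (hS : S ⊆ Finset.Icc 1 (2*n)) :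
    (S.card = n ∧ ∀ j ∈ Finset.range n, (S.sort (· ≤ ·)).getD j 0 ≤ 2 * (j + 1)) ↔
      (fun i : Fin (zigzag 1 1 n).length => decide ((i : ℕ) + 1 ∉ S))
        ∈ pathsBelow (zigzag 1 1 n) := by
  set P := zigzag 1 1 n with hPdef
  have hP : P.length = 2 * n := zz_len n
  set f : Fin P.length → Bool := fun i => decide ((i : ℕ) + 1 ∉ S) with hfdef
  set l := List.ofFn f with hldef
  have hl : l.length = 2 * n := by rw [hldef, List.length_ofFn, hP]
  -- prefix counts of l
  have hcnt : ∀ j, j ≤ 2 * n →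
      (l.take j).count true + (S.filter (· ≤ j)).card = j := by
    intro j hj
    rw [count_take l j (by omega)]
    have hcongr : (Finset.range j).filter (fun i => l.getD i false = true)
        = (Finset.range j).filter (fun i => i + 1 ∉ S) := by
      apply Finset.filter_congr
      intro i hi
      rw [Finset.mem_range] at hi
      rw [hldef, ofFn_getD f i (by omega) false]
      simp [hfdef]
    rw [hcongr, ← range_filter_card n j S hS hj]
    have := Finset.card_filter_add_card_filter_not
      (s := Finset.range j) (p := fun i => i + 1 ∈ S)
    simp only [Finset.card_range] at this
    rw [add_comm]
    convert this using 3
  have hfull : l.count true + S.card = 2 * n := by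
    have := hcnt (2 * n) le_rfl
    rwa [List.take_of_length_le (by omega),
      Finset.filter_true_of_mem (fun x hx => (Finset.mem_Icc.1 (hS hx)).2)] at this
  have hcardle : S.card ≤ 2 * n := by
    calc S.card ≤ (Finset.Icc 1 (2*n)).card := Finset.card_le_card hS
    _ = 2 * n := by rw [Nat.card_Icc]; omega
  have hsortlen : (S.sort (· ≤ ·)).length = S.card := Finset.length_sort _
  have hsorted : (S.sort (· ≤ ·)).Pairwise (· ≤ ·) := Finset.pairwise_sort _ _
  -- monotonicity of (S.filter (· ≤ ·)).card
  have hmono : ∀ j k, j ≤ k → (S.filter (· ≤ j)).card ≤ (S.filter (· ≤ k)).card := by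
    intro j k hjk
    exact Finset.card_le_card (Finset.monotone_filter_right S (fun x _ hx => le_trans hx hjk))
  have hmem : f ∈ pathsBelow P ↔
      (l.count true = P.count true ∧ NotAbove l P) := by
    rw [pathsBelow, Finset.mem_filter]
    simp [hldef]
  constructor
  · rintro ⟨hcard, hsort⟩
    rw [hmem, zz_count]
    have hstep : ∀ k, k ≤ n → k ≤ (S.filter (· ≤ 2 * k)).card := by
      intro k hk
      match k with
      | 0 => omega
      | k + 1 =>
        have hj := hsort k (Finset.mem_range.2 (by omega))
        rw [sorted_getD_le_iff _ hsorted k (by omega) _] at hj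
        rwa [cardFilterLeEq]
    constructor
    · have := hcnt (2 * n) le_rfl
      omega
    · intro j hj
      rw [Finset.mem_range, hP] at hj
      rw [zz_take n j (by omega)]
      have h1 := hcnt j (by omega)
      have h2 := hstep (j / 2) (by omega)
      have h3 := hmono (2 * (j / 2)) j (by omega)
      omega
  · intro hf
    rw [hmem, zz_count] at hf
    obtain ⟨hcount, hNA⟩ := hf
    have hcard : S.card = n := by omega
    refine ⟨hcard, ?_⟩
    intro j hj
    rw [Finset.mem_range] at hj
    rw [sorted_getD_le_iff _ hsorted j (by omega) _, ← cardFilterLeEq]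
    have hna := hNA (2 * (j + 1)) (by rw [Finset.mem_range, hP]; omega)
    rw [zz_take n _ (by omega)] at hna
    have h1 := hcnt (2 * (j + 1)) (by omega)
    omega


/-- the achievable sets in the tennis ball problem, i.e. the `n`-element
subsets `{a_1 < … < a_n}` of `{1,…,2n}` with `a_j ≤ 2j` for all `j`, are equinumerous
with the lattice paths not above `(NE)^n`. -/
theorem stmt16 (n : ℕ) :
    (((Finset.Icc 1 (2 * n)).powerset.filter fun S =>
        S.card = n ∧ ∀ j ∈ Finset.range n, (S.sort (· ≤ ·)).getD j 0 ≤ 2 * (j + 1)).card)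
      = (pathsBelow (zigzag 1 1 n)).card := by
  have hP : (zigzag 1 1 n).length = 2 * n := zz_len n
  apply Finset.card_nbij'
    (fun S => fun i : Fin (zigzag 1 1 n).length => decide ((i : ℕ) + 1 ∉ S))
    (fun f => (Finset.Icc 1 (2 * n)).filter fun x => (List.ofFn f).getD (x - 1) true = false)
  · intro S hS
    rw [Finset.mem_coe, Finset.mem_filter, Finset.mem_powerset] at hS
    exact (main_iff n S hS.1).1 hS.2
  · intro f hf
    rw [Finset.mem_coe, Finset.mem_filter, Finset.mem_powerset]
    refine ⟨Finset.filter_subset _ _, ?_⟩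
    apply (main_iff n _ (Finset.filter_subset _ _)).2
    have heq : (fun i : Fin (zigzag 1 1 n).length =>
        decide ((i : ℕ) + 1 ∉ (Finset.Icc 1 (2 * n)).filter
          fun x => (List.ofFn f).getD (x - 1) true = false)) = f := by
      funext i
      have hi : (i : ℕ) < 2 * n := by rw [← hP]; exact i.isLt
      have hd : (List.ofFn f).getD ((i : ℕ) + 1 - 1) true = f i := by
        rw [show (i : ℕ) + 1 - 1 = (i : ℕ) by omega, ofFn_getD f _ i.isLt]
      have hmemx : ((i : ℕ) + 1 ∈ (Finset.Icc 1 (2 * n)).filter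
          fun x => (List.ofFn f).getD (x - 1) true = false) ↔ f i = false := by
        rw [Finset.mem_filter, Finset.mem_Icc, hd]
        exact ⟨fun h => h.2, fun h => ⟨⟨by omega, by omega⟩, h⟩⟩
      by_cases hb : f i = false <;> simp [hb, List.ofFnNthVal, i.isLt] <;> omega
    rw [heq]
    exact hf
  · intro S hS
    rw [Finset.mem_coe, Finset.mem_filter, Finset.mem_powerset] at hS
    ext x
    simp only [Finset.mem_filter, Finset.mem_Icc]
    constructor
    · rintro ⟨⟨hx1, hx2⟩, hd⟩
      rw [ofFn_getD _ _ (show x - 1 < (zigzag 1 1 n).length by omega)] at hd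
      simp only [decide_eq_false_iff_not, not_not] at hd
      rwa [show x - 1 + 1 = x by omega] at hd
    · intro hx
      obtain ⟨hx1, hx2⟩ := Finset.mem_Icc.1 (hS.1 hx)
      refine ⟨⟨hx1, hx2⟩, ?_⟩
      rw [ofFn_getD _ _ (show x - 1 < (zigzag 1 1 n).length by omega)]
      simp only [decide_eq_false_iff_not, not_not]
      rwa [show x - 1 + 1 = x by omega]
  · intro f hf
    funext i
    have hi : (i : ℕ) < 2 * n := by rw [← hP]; exact i.isLt
    have hd : (List.ofFn f).getD ((i : ℕ) + 1 - 1) true = f i := by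
      rw [show (i : ℕ) + 1 - 1 = (i : ℕ) by omega, ofFn_getD f _ i.isLt]
    have hmemx : ((i : ℕ) + 1 ∈ (Finset.Icc 1 (2 * n)).filter
        fun x => (List.ofFn f).getD (x - 1) true = false) ↔ f i = false := by
      rw [Finset.mem_filter, Finset.mem_Icc, hd]
      exact ⟨fun h => h.2, fun h => ⟨⟨by omega, by omega⟩, h⟩⟩
    by_cases hb : f i = false <;> simp [hb, List.ofFnNthVal, i.isLt] <;> omega
end
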